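/- arXiv:math/0612037 — 7 statements merged into one kernel-verified Lean document; each statement's English description precedes it below -/
import Mathlib

section
/- Let R be a local artinian principal ideal ring such that the residue division ring R/J(R) has characteristic p > 0, and let G be a nontrivial finite p-group (a finite group whose order is a power of p). If the group ring RG is a principal ideal ring, then R is a division ring. -/
open Function

universe u v

/-- A (not necessarily commutative) ring in which every left ideal and every
right ideal is principal.  Right ideals of `R` are identified with left ideals
of the opposite ring `Rᵐᵒᵖ`. -/
def IsPrincipalIdealRingNC (R : Type*) [Ring R] : Prop :=
  (∀ I : Ideal R, I.IsPrincipal) ∧ (∀ I : Ideal Rᵐᵒᵖ, I.IsPrincipal)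

/-- A left and right artinian principal ideal ring. -/
def IsArtinianPIR (R : Type*) [Ring R] : Prop :=
  IsArtinianRing R ∧ IsArtinianRing Rᵐᵒᵖ ∧ IsPrincipalIdealRingNC R

/-- The Jacobson radical of a (possibly noncommutative) ring: the intersection
of all maximal left ideals. -/
def jacobsonRad (R : Type*) [Ring R] : Ideal R :=
  Ideal.jacobson (⊥ : Ideal R)

/-- The square `J(R)²` of the Jacobson radical, as the (left) ideal generated by
all products of two elements of `J(R)`; since `J(R)` is two-sided this is the
usual two-sided ideal `J(R)²`. -/
def jacobsonRadSq (R : Type*) [Ring R] : Ideal R :=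
  Ideal.span {x : R | ∃ a ∈ jacobsonRad R, ∃ b ∈ jacobsonRad R, x = a * b}

/-- `a` is a left morphic element: there is `b` with `Ra = ann_ℓ(b)` and `Rb = ann_ℓ(a)`. -/
def IsLeftMorphicElem {R : Type*} [Ring R] (a : R) : Prop :=
  ∃ b : R, (∀ x : R, x * b = 0 ↔ ∃ r : R, x = r * a) ∧
    (∀ x : R, x * a = 0 ↔ ∃ r : R, x = r * b)

/-- A left morphic ring: every element is left morphic. -/
def IsLeftMorphicRing (R : Type*) [Ring R] : Prop :=
  ∀ a : R, IsLeftMorphicElem a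

/-- `a` is a right morphic element: there is `b` with `aR = ann_r(b)` and `bR = ann_r(a)`. -/
def IsRightMorphicElem {R : Type*} [Ring R] (a : R) : Prop :=
  ∃ b : R, (∀ x : R, b * x = 0 ↔ ∃ r : R, x = a * r) ∧
    (∀ x : R, a * x = 0 ↔ ∃ r : R, x = b * r)

/-- A right morphic ring: every element is right morphic. -/
def IsRightMorphicRing (R : Type*) [Ring R] : Prop :=
  ∀ a : R, IsRightMorphicElem a

/-- A local, left and right artinian, principal ideal ring. -/
def IsLocalArtinianPIR (S : Type*) [Ring S] : Prop :=
  IsLocalRing S ∧ IsArtinianRing S ∧ IsArtinianRing Sᵐᵒᵖ ∧ IsPrincipalIdealRingNC S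

/-- `R` is a division ring: it is nontrivial and every nonzero element is a unit. -/
def IsDivisionRingNC (R : Type*) [Ring R] : Prop :=
  Nontrivial R ∧ ∀ x : R, x ≠ 0 → IsUnit x

/-- The residue ring `R/J(R)` (realized by any surjection with kernel `J(R)`)
has characteristic `p`. -/
def ResidueCharP (R : Type u) [Ring R] (p : ℕ) : Prop :=
  ∀ (D : Type u) [DivisionRing D] (f : R →+* D), Function.Surjective f →
    RingHom.ker f = jacobsonRad R → CharP D p

/-- `G` is `R`-admissible: every central idempotent of `(R/J)G` is the
coefficientwise image of a central idempotent of `RG`, where `R/J` is realized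
by any surjective ring homomorphism with kernel `J(R)`. -/
def IsAdmissible (R : Type u) [Ring R] (G : Type v) [Group G] : Prop :=
  ∀ (D : Type u) [Ring D] (f : R →+* D), Function.Surjective f →
    RingHom.ker f = jacobsonRad R →
    ∀ e : MonoidAlgebra D G, IsIdempotentElem e →
      (∀ y : MonoidAlgebra D G, e * y = y * e) →
      ∃ e' : MonoidAlgebra R G, IsIdempotentElem e' ∧
        (∀ y : MonoidAlgebra R G, e' * y = y * e') ∧
        ∀ g : G, f (e'.coeff g) = e.coeff g

/-- `G` is finite-by-infinite cyclic: there is a finite normal subgroup `N ⊴ G`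
(the kernel of the homomorphism below) with `G/N` infinite cyclic. -/
def IsFiniteByInfiniteCyclic (G : Type*) [Group G] : Prop :=
  ∃ φ : G →* Multiplicative ℤ, Function.Surjective φ ∧ Finite φ.ker

/-- `G` is finite `p'`-by-cyclic `p`: there is a finite normal subgroup `N ⊴ G`
(the kernel below) of order prime to `p` with `G/N` a cyclic `p`-group. -/
def IsFinitePrimeToPByCyclicP (p : ℕ) (G : Type*) [Group G] : Prop :=
  ∃ (r : ℕ) (φ : G →* Multiplicative (ZMod (p ^ r))),
    Function.Surjective φ ∧ Finite φ.ker ∧ ¬ p ∣ Nat.card φ.ker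

/-- `G` is finite `p'`-by-infinite cyclic: there is a finite normal subgroup
`N ⊴ G` (the kernel below) of order prime to `p` with `G/N` infinite cyclic. -/
def IsFinitePrimeToPByInfiniteCyclic (p : ℕ) (G : Type*) [Group G] : Prop :=
  ∃ φ : G →* Multiplicative ℤ, Function.Surjective φ ∧ Finite φ.ker ∧
    ¬ p ∣ Nat.card φ.ker

/-- `G` is finite `π'`-by-cyclic `π`: there is a finite normal subgroup `N ⊴ G`
(the kernel below) whose order is divisible by no prime of `π`, with `G/N` a
finite cyclic group all of whose order's prime divisors lie in `π`. -/
def IsFinitePrimeToPiByCyclicPi (π : Set ℕ) (G : Type*) [Group G] : Prop :=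
  ∃ (n : ℕ) (φ : G →* Multiplicative (ZMod n)), 0 < n ∧
    (∀ q : ℕ, q.Prime → q ∣ n → q ∈ π) ∧
    Function.Surjective φ ∧ Finite φ.ker ∧ ∀ q ∈ π, ¬ q ∣ Nat.card φ.ker

/-- `G` is finite `π'`-by-infinite cyclic: there is a finite normal subgroup
`N ⊴ G` (the kernel below) whose order is divisible by no prime of `π`, with
`G/N` infinite cyclic. -/
def IsFinitePrimeToPiByInfiniteCyclic (π : Set ℕ) (G : Type*) [Group G] : Prop :=
  ∃ φ : G →* Multiplicative ℤ, Function.Surjective φ ∧ Finite φ.ker ∧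
    ∀ q ∈ π, ¬ q ∣ Nat.card φ.ker

/-!
Let `J = J(R)`, `ε : RG → R` the augmentation and `π : R → R/J`. A nontrivial finite `p`-group
maps onto `ℤ/p`, giving an additive character `v : G → R/J` with central values and `v(g₀) = 1`.
The additive map `δ(∑ r_g g) = ∑ π(r_g) v(g)` satisfies `δ(xy) = δ(x) π(ε y) + π(ε x) δ(y)`, so on
the left ideal `ε⁻¹(J) = RG·m` it is `δ(xm) = π(ε x) δ(m)`. As `g₀ - 1 ∈ RG·m`, `δ(m) ≠ 0`. For
`a ∈ J` write `a·1 = xm`; then `δ(xm) = 0` forces `ε x ∈ J`, so `a = ε(x) ε(m) ∈ J²`. Hence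
`J = J²`, and since `J` is finitely generated, Nakayama's lemma gives `J = 0`.
-/

namespace IsLocalRing

variable {R : Type*} [Ring R] [IsLocalRing R]

instance isDedekindFiniteMonoid : IsDedekindFiniteMonoid R where
  mul_eq_one_symm {a b} hab := by
    have hidem : IsIdempotentElem (b * a) := by
      rw [IsIdempotentElem, mul_assoc, ← mul_assoc a, hab, one_mul]
    rcases isUnit_or_isUnit_of_add_one (add_sub_cancel (b * a) 1) with hu | hu
    · exact (IsIdempotentElem.iff_eq_one_of_isUnit hu).mp hidem
    · have hb : (1 - b * a) * b = 0 := by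
        rw [sub_mul, one_mul, mul_assoc, hab, mul_one, sub_self]
      rw [hu.mul_right_eq_zero] at hb
      simp [hb] at hab

theorem mem_jacobson_iff_not_isUnit {x : R} : x ∈ Ring.jacobson R ↔ ¬IsUnit x := by
  rw [← Ideal.jacobson_bot, Ideal.mem_jacobson_iff]
  constructor
  · rintro h ⟨u, rfl⟩
    obtain ⟨z, hz⟩ := h (-↑u⁻¹)
    simp at hz
  · intro hx y
    have hunit : IsUnit (y * x + 1) := by
      refine (isUnit_or_isUnit_of_add_one (neg_add_cancel_left (y * x) 1)).resolve_left ?_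
      exact fun h => hx (isUnit_of_mul_isUnit_right (neg_neg (y * x) ▸ h.neg))
    obtain ⟨z, hz⟩ := hunit.exists_left_inv
    exact ⟨z, by rw [Ideal.mem_bot, mul_assoc z, ← mul_add_one, hz, sub_self]⟩

theorem isUnit_of_jacobson_eq_bot (h : Ring.jacobson R = ⊥) {x : R} (hx : x ≠ 0) : IsUnit x := by
  by_contra hu
  rw [← mem_jacobson_iff_not_isUnit, h, Ideal.mem_bot] at hu
  exact hx hu

variable (R) in
noncomputable abbrev divisionRingQuotientJacobson : DivisionRing (R ⧸ Ring.jacobson R) :=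
  haveI : Nontrivial (R ⧸ Ring.jacobson R) :=
    Ideal.Quotient.nontrivial_iff.mpr (Ring.jacobson_lt_top R).ne
  DivisionRing.ofIsUnitOrEqZero fun d => by
    obtain ⟨x, rfl⟩ := Ideal.Quotient.mk_surjective d
    by_cases hx : IsUnit x
    · exact .inl (hx.map _)
    · exact .inr (Ideal.Quotient.eq_zero_iff_mem.mpr (mem_jacobson_iff_not_isUnit.mpr hx))

end IsLocalRing

theorem exists_surjective_monoidHom_zmod_of_card_eq_prime_pow {p : ℕ} [hp : Fact p.Prime]
    {G : Type*} [Group G] [Finite G] [Nontrivial G] {r : ℕ} (hG : Nat.card G = p ^ r) :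
    ∃ c : G →* Multiplicative (ZMod p), Function.Surjective c := by
  obtain ⟨n, rfl⟩ : ∃ n, r = n + 1 := Nat.exists_eq_add_one.mpr <| Nat.pos_of_ne_zero fun hr => by
    have := Finite.one_lt_card (α := G)
    simp_all
  obtain ⟨K, hK⟩ := Sylow.exists_subgroup_card_pow_prime p (hG ▸ pow_dvd_pow p n.le_succ)
  have hindex : K.index = p := by
    have hcard := K.card_mul_index
    rw [hK, hG, pow_succ] at hcard
    exact Nat.eq_of_mul_eq_mul_left (pow_pos hp.out.pos n) hcard
  have : K.Normal := Subgroup.normal_of_index_eq_minFac_card <| by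
    rw [hindex, hG, hp.out.pow_minFac n.succ_ne_zero]
  let e : G ⧸ K ≃* Multiplicative (ZMod p) :=
    mulEquivOfPrimeCardEq (K.index_eq_card ▸ hindex) (by simp)
  exact ⟨e.toMonoidHom.comp (QuotientGroup.mk' K),
    e.surjective.comp (QuotientGroup.mk'_surjective K)⟩

namespace MonoidAlgebra

variable {R D G : Type*} [Ring R] [Ring D]

noncomputable def augDeriv (π : R →+* D) (v : G → D) : MonoidAlgebra R G →+ D :=
  liftNC π v

@[simp]
theorem augDeriv_single (π : R →+* D) (v : G → D) (g : G) (r : R) :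
    augDeriv π v (single g r) = π r * v g :=
  liftNC_single _ _ _ _

variable [Monoid G]

variable (R G) in
noncomputable def augmentation : MonoidAlgebra R G →+* R :=
  liftNCRingHom (RingHom.id R) 1 fun _ _ => Commute.one_right _

@[simp]
theorem augmentation_single (g : G) (r : R) : augmentation R G (single g r) = r := by
  simp [augmentation, liftNCRingHom, liftNC_single]

theorem augDeriv_mul {π : R →+* D} {v : G → D} (hadd : ∀ g h, v (g * h) = v g + v h)
    (hcomm : ∀ g r, Commute (v g) (π r)) (x y : MonoidAlgebra R G) :
    augDeriv π v (x * y) =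
      augDeriv π v x * π (augmentation R G y) + π (augmentation R G x) * augDeriv π v y := by
  induction x using MonoidAlgebra.induction_linear with
  | zero => simp
  | add x₁ x₂ h₁ h₂ => simp only [add_mul, map_add, h₁, h₂]; abel
  | single g r =>
    induction y using MonoidAlgebra.induction_linear with
    | zero => simp
    | add y₁ y₂ h₁ h₂ => simp only [mul_add, map_add, h₁, h₂]; abel
    | single h s =>
      simp only [single_mul_single, augDeriv_single, augmentation_single, hadd, map_mul, mul_add]
      rw [mul_assoc (π r) (v g), (hcomm g s).eq]
      simp only [mul_assoc]

theorem ker_le_ker_smul_ker_of_isPrincipal_comap [NoZeroDivisors D] {π : R →+* D} {v : G → D}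
    (hadd : ∀ g h, v (g * h) = v g + v h) (hcomm : ∀ g r, Commute (v g) (π r)) {g₀ : G}
    (hg₀ : v g₀ ≠ 0) (hI : (Ideal.comap (augmentation R G) (RingHom.ker π)).IsPrincipal) :
    RingHom.ker π ≤ RingHom.ker π • RingHom.ker π := by
  obtain ⟨m, hm⟩ := hI
  have hI_mem {x} (hx : π (augmentation R G x) = 0) : ∃ t, t * m = x :=
    Submodule.mem_span_singleton.mp (hm ▸ Ideal.mem_comap.mpr (RingHom.mem_ker.mpr hx))
  have hm_ker : augmentation R G m ∈ RingHom.ker π :=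
    Ideal.mem_comap.mp (hm ▸ Submodule.mem_span_singleton_self m)
  have hδ (t) : augDeriv π v (t * m) = π (augmentation R G t) * augDeriv π v m := by
    rw [augDeriv_mul hadd hcomm, RingHom.mem_ker.mp hm_ker, mul_zero, zero_add]
  have hv₁ : v 1 = 0 := by simpa using hadd 1 1
  have hδm : augDeriv π v m ≠ 0 := by
    obtain ⟨t, ht⟩ := hI_mem (x := single g₀ 1 - 1) (by simp [one_def])
    intro h
    apply hg₀
    simpa [ht, h, one_def, hv₁] using hδ t
  intro a ha
  obtain ⟨s, hs⟩ := hI_mem (x := single 1 a) (by simpa using ha)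
  have hs_ker : π (augmentation R G s) = 0 := by
    refine (mul_eq_zero.mp ?_).resolve_right hδm
    rw [← hδ, hs, augDeriv_single, hv₁, mul_zero]
  have hfactor : augmentation R G s * augmentation R G m = a := by
    rw [← map_mul, hs, augmentation_single]
  exact hfactor ▸ Submodule.smul_mem_smul hs_ker hm_ker

end MonoidAlgebra

theorem divisionRing_of_groupRing_pGroup_PIR_general (R : Type u) [Ring R]
    (hloc : IsLocalRing R)
    (hpir : IsPrincipalIdealRingNC R)
    (p : ℕ) (hp : p.Prime) (hchar : ResidueCharP R p)
    (G : Type v) [Group G] [Finite G] (hGnt : Nontrivial G)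
    (hGp : ∃ r : ℕ, Nat.card G = p ^ r)
    (hRG : IsPrincipalIdealRingNC (MonoidAlgebra R G)) :
    IsDivisionRingNC R := by
  have : Fact p.Prime := ⟨hp⟩
  let := IsLocalRing.divisionRingQuotientJacobson R
  have : CharP (R ⧸ Ring.jacobson R) p :=
    hchar _ (Ideal.Quotient.mk _) Ideal.Quotient.mk_surjective
      (by rw [Ideal.mk_ker, jacobsonRad, Ideal.jacobson_bot])
  obtain ⟨r, hr⟩ := hGp
  obtain ⟨c, hc⟩ := exists_surjective_monoidHom_zmod_of_card_eq_prime_pow hr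
  obtain ⟨g₀, hg₀⟩ := hc (Multiplicative.ofAdd 1)
  let v (g : G) : R ⧸ Ring.jacobson R := ZMod.castHom dvd_rfl _ (c g).toAdd
  have hv_add (g h : G) : v (g * h) = v g + v h := by simp [v]
  have hv_comm (g : G) (d : R ⧸ Ring.jacobson R) : Commute (v g) d := by
    simpa [v, ← ZMod.natCast_val] using Nat.cast_commute _ _
  have hv₀ : v g₀ ≠ 0 := by simp [v, hg₀]
  have hJ : Ring.jacobson R ≤ Ring.jacobson R • Ring.jacobson R := by
    simpa only [Ideal.mk_ker] using MonoidAlgebra.ker_le_ker_smul_ker_of_isPrincipal_comap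
      (π := Ideal.Quotient.mk _) hv_add (fun g _ => hv_comm g _) hv₀ (hRG.1 _)
  have hJ_bot : Ring.jacobson R = ⊥ :=
    Submodule.FG.eq_bot_of_le_jacobson_smul (Ideal.jacobson_bot (R := R) ▸ (hpir.1 _).fg) hJ
  exact ⟨hloc.toNontrivial, fun _ hx => IsLocalRing.isUnit_of_jacobson_eq_bot hJ_bot hx⟩

/-- If `R` is a local artinian principal ideal ring whose residue division ring
has characteristic `p > 0`, `G` is a nontrivial finite `p`-group, and the group
ring `RG` is a principal ideal ring, then `R` is a division ring. -/
theorem divisionRing_of_groupRing_pGroup_PIR (R : Type u) [Ring R]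
    (hloc : IsLocalRing R) (hart : IsArtinianRing R) (hartop : IsArtinianRing Rᵐᵒᵖ)
    (hpir : IsPrincipalIdealRingNC R)
    (p : ℕ) (hp : p.Prime) (hchar : ResidueCharP R p)
    (G : Type v) [Group G] [Finite G] (hGnt : Nontrivial G)
    (hGp : ∃ r : ℕ, Nat.card G = p ^ r)
    (hRG : IsPrincipalIdealRingNC (MonoidAlgebra R G)) :
    IsDivisionRingNC R :=
  divisionRing_of_groupRing_pGroup_PIR_general R hloc hpir p hp hchar G hGnt hGp hRG
end

section
/- Let R be an artinian principal ideal ring. If the group ring R[ℤ] of the infinite cyclic group over R (equivalently, the Laurent polynomial ring over R) is a principal ideal ring, then R is a semisimple ring. -/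
open Function

universe u v

/-!
Let `a ∈ J(R)` and suppose the left ideal of `R[T;T⁻¹]` generated by `a` and `T - 1` is
principal, generated by `f`. Evaluate at `T = 1 + ε` in the dual numbers `R[ε]`; the two
components of this evaluation are `h ↦ h(1)` and `h ↦ h'(1)`. Writing `T - 1 = g f` gives
`g(1) f(1) = 0` and `g(1) f'(1) + g'(1) f(1) = 1`, while `f(1) ∈ R a ⊆ J(R)`. So `g(1)` is
right invertible modulo `J(R)`, hence a unit as `R` is Dedekind-finite, and `f(1) = 0`.
Since `a` is a left multiple of `f`, also `a = 0`. Thus `J(R) = 0` and the artinian ring `R`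
is semisimple.
-/

open DualNumber TrivSqZeroExt LaurentPolynomial

section

variable {R : Type*} [Ring R]

theorem isUnit_of_mul_sub_one_mem_jacobson [IsDedekindFiniteMonoid R] {x y : R}
    (h : x * y - 1 ∈ Ring.jacobson R) : IsUnit x := by
  rw [← Ideal.jacobson_bot] at h
  obtain ⟨s, hs⟩ := Ideal.exists_mul_sub_mem_of_sub_one_mem_jacobson _ h
  rw [Ideal.mem_bot, sub_eq_zero] at hs
  exact isUnit_of_mul_isUnit_left (IsUnit.of_mul_eq_one_right s hs)

namespace DualNumber

theorem fst_eq_zero_of_mul_eq_eps [IsDedekindFiniteMonoid R] {p q : R[ε]}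
    (hpq : p * q = ε) (hq : q.fst ∈ Ring.jacobson R) : q.fst = 0 := by
  have hfst : p.fst * q.fst = 0 := by simpa using congrArg fst hpq
  have hsnd : p.fst * q.snd + p.snd * q.fst = 1 := by simpa using congrArg snd hpq
  have hunit : IsUnit p.fst := isUnit_of_mul_sub_one_mem_jacobson (y := q.snd) <| by
    rw [← hsnd, sub_add_cancel_left]
    exact neg_mem (Ideal.mul_mem_left _ _ hq)
  exact hunit.mul_right_eq_zero.mp hfst

variable (R) in
def oneAddEps : (R[ε])ˣ where
  val := 1 + ε
  inv := 1 - ε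
  val_inv := by noncomm_ring; simp
  inv_val := by noncomm_ring; simp

theorem commute_inl_oneAddEps_zpow (r : R) (n : ℤ) :
    Commute (inl r : R[ε]) ↑(oneAddEps R ^ n) :=
  ((Commute.one_right _).add_right (commute_eps_left _).symm).units_zpow_right n

end DualNumber

namespace LaurentPolynomial

variable (R) in
noncomputable def evalOneAddEps : R[T;T⁻¹] →+* R[ε] :=
  AddMonoidAlgebra.liftNCRingHom (inlHom R R)
    ((Units.coeHom _).comp (zpowersHom _ (oneAddEps R)))
    fun r n => commute_inl_oneAddEps_zpow r n.toAdd

theorem evalOneAddEps_C (r : R) : evalOneAddEps R (C r) = inl r :=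
  (AddMonoidAlgebra.liftNCRingHom_single _ _ _ _ _).trans (by simp)

theorem evalOneAddEps_T_one : evalOneAddEps R (T 1) = 1 + ε :=
  (AddMonoidAlgebra.liftNCRingHom_single _ _ _ _ _).trans (by simp [oneAddEps])

theorem eq_zero_of_mem_jacobson_of_isPrincipal_span [IsDedekindFiniteMonoid R] {a : R}
    (ha : a ∈ Ring.jacobson R)
    (hI : (Ideal.span {C a, T 1 - 1} : Ideal R[T;T⁻¹]).IsPrincipal) : a = 0 := by
  obtain ⟨f, hf⟩ := hI
  have hmem : ∀ x, x ∈ Ideal.span {C a, T 1 - 1} ↔ ∃ y, y * f = x := fun x => by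
    rw [hf]; exact Ideal.mem_span_singleton'
  obtain ⟨t, ht⟩ := (hmem (C a)).mp (Ideal.subset_span (by simp))
  obtain ⟨g, hg⟩ := (hmem (T 1 - 1)).mp (Ideal.subset_span (by simp))
  obtain ⟨u, v, huv⟩ := Ideal.mem_span_pair.mp ((hmem f).mpr ⟨1, one_mul f⟩)
  let φ := evalOneAddEps R
  have hf_fst : (φ f).fst ∈ Ring.jacobson R := by
    rw [← huv]
    simp only [φ, map_add, map_mul, map_sub, map_one, evalOneAddEps_C, evalOneAddEps_T_one,
      add_sub_cancel_left, fst_add, fst_mul, fst_inl, fst_eps, mul_zero, add_zero]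
    exact Ideal.mul_mem_left _ _ ha
  have hgf : φ g * φ f = ε := by
    rw [← map_mul, hg, map_sub, evalOneAddEps_T_one, map_one, add_sub_cancel_left]
  have hf0 : (φ f).fst = 0 := fst_eq_zero_of_mul_eq_eps hgf hf_fst
  simpa [φ, evalOneAddEps_C, hf0] using congrArg (fst ∘ φ) ht.symm

end LaurentPolynomial

end

/-- If `R` is an artinian principal ideal ring and the group ring `R[ℤ]` (the
Laurent polynomial ring) is a principal ideal ring, then `R` is semisimple. -/
theorem semisimple_of_laurent_PIR (R : Type*) [Ring R] (hR : IsArtinianPIR R)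
    (h : IsPrincipalIdealRingNC (AddMonoidAlgebra R ℤ)) :
    IsSemisimpleRing R := by
  have : IsArtinianRing R := hR.1
  rw [IsArtinianRing.isSemisimpleRing_iff_jacobson, eq_bot_iff]
  exact fun a ha => eq_zero_of_mem_jacobson_of_isPrincipal_span ha (h.1 _)
end

section
/- Let R be a local artinian ring with Jacobson radical J. Then R is a principal ideal ring if and only if the quotient ring R/J² is a principal ideal ring. -/
open Function

universe u v

/-! If `R/J²` has principal left ideals, then `J = Ra + J²` for some `a`, and since `J` is
nilpotent this forces `J = Ra`. In a local ring every nonunit then lies in `Ra`, so by induction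
every element is either in `Raᵏ` or of the form `u aʲ` with `u` a unit and `j < k`; hence a left
ideal `I` equals `R aᵏ` for the least `k` with `aᵏ ∈ I`. Right ideals are the left ideals of
`Rᵐᵒᵖ`, which is again local artinian, with `J(Rᵐᵒᵖ) = J(R)ᵐᵒᵖ` since in a local ring `J` is the
set of nonunits. The converse holds because principal ideal rings pass to quotients. -/

open Ideal MulOpposite

section LocalRing

variable {R : Type*} [Ring R] [IsLocalRing R]

instance IsLocalRing.isDedekindFiniteMonoid_s6 : IsDedekindFiniteMonoid R where
  mul_eq_one_symm {a b} hab := by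
    have hidem : b * a * (b * a) = b * a * 1 := by
      rw [mul_one, mul_assoc, ← mul_assoc a, hab, one_mul]
    -- the idempotent `b * a` is `1` unless `1 - b * a` is a unit
    rcases IsLocalRing.isUnit_or_isUnit_of_add_one (add_sub_cancel (b * a) 1) with h | h
    · exact h.mul_left_cancel hidem
    · have hb : (1 - b * a) * b = 0 := by
        rw [sub_mul, one_mul, mul_assoc, hab, mul_one, sub_self]
      rw [h.mul_right_eq_zero] at hb
      simp [hb] at hab

instance IsLocalRing.mulOpposite : IsLocalRing Rᵐᵒᵖ where
  isUnit_or_isUnit_of_add_one hab :=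
    (IsLocalRing.isUnit_or_isUnit_of_add_one (congrArg unop hab)).imp isUnit_unop.1 isUnit_unop.1

theorem mem_jacobsonRad_iff {x : R} : x ∈ jacobsonRad R ↔ ¬IsUnit x := by
  refine ⟨fun hx hu => ?_, fun hx => Ideal.mem_jacobson_iff.2 fun y => ?_⟩
  · exact bot_ne_top (jacobson_eq_top_iff.1 ((jacobsonRad R).eq_top_of_isUnit_mem hx hu))
  · have hyx : ¬IsUnit (y * x) := fun h => hx (isUnit_of_mul_isUnit_right h)
    obtain ⟨u, hu⟩ := (IsLocalRing.isUnit_or_isUnit_of_add_one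
      (add_neg_cancel_right 1 (y * x))).resolve_right (by rwa [IsUnit.neg_iff])
    refine ⟨↑u⁻¹, ?_⟩
    rw [mul_assoc, ← mul_add_one (↑u⁻¹ : R), add_comm, ← hu, Units.inv_mul, sub_self]
    exact Submodule.zero_mem _

theorem op_mem_jacobsonRad_iff {x : R} : op x ∈ jacobsonRad Rᵐᵒᵖ ↔ x ∈ jacobsonRad R := by
  rw [mem_jacobsonRad_iff, mem_jacobsonRad_iff, isUnit_op]

end LocalRing

theorem jacobsonRadSq_eq_mul (R : Type*) [Ring R] :
    jacobsonRadSq R = jacobsonRad R * jacobsonRad R := by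
  refine le_antisymm (span_le.2 ?_) (mul_le.2 fun a ha b hb => subset_span ⟨a, ha, b, hb, rfl⟩)
  rintro _ ⟨a, ha, b, hb, rfl⟩
  exact mul_mem_mul ha hb

theorem op_mem_jacobsonRadSq {R : Type*} [Ring R] [IsLocalRing R] {x : R}
    (hx : x ∈ jacobsonRadSq R) : op x ∈ jacobsonRadSq Rᵐᵒᵖ := by
  rw [jacobsonRadSq_eq_mul] at hx ⊢
  refine Submodule.smul_induction_on hx (fun a ha b hb => ?_) fun _ _ => add_mem
  exact mul_mem_mul (op_mem_jacobsonRad_iff.2 hb) (op_mem_jacobsonRad_iff.2 ha)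

theorem ker_op_le_jacobsonRadSq {R S : Type*} [Ring R] [Ring S] [IsLocalRing R] {f : R →+* S}
    (hker : RingHom.ker f ≤ jacobsonRadSq R) : RingHom.ker f.op ≤ jacobsonRadSq Rᵐᵒᵖ := by
  intro x hx
  have : unop x ∈ RingHom.ker f := by simpa [RingHom.op_apply_apply] using hx
  exact op_mem_jacobsonRadSq (hker this)

theorem RingHom.op_surjective {R S : Type*} [Ring R] [Ring S] {f : R →+* S}
    (hf : Function.Surjective f) : Function.Surjective f.op :=
  MulOpposite.op_surjective.comp (hf.comp unop_surjective)

section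

variable {R : Type*} [Ring R]

theorem Ideal.le_of_le_sup_mul_self_of_isNilpotent {I K : Ideal R} (hI : IsNilpotent I)
    (h : I ≤ K ⊔ I * I) : I ≤ K := by
  have hpow : ∀ n : ℕ, I ≤ K ⊔ I ^ (n + 1) := by
    intro n
    induction n with
    | zero => simp [Submodule.pow_one]
    | succ n ih =>
      calc I ≤ K ⊔ I * (K ⊔ I ^ (n + 1)) := h.trans (sup_le_sup_left (mul_mono_right ih) K)
        _ = K ⊔ I * K ⊔ I ^ (n + 2) := by
          rw [mul_sup, ← Submodule.pow_succ' I n.succ_ne_zero, sup_assoc]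
        _ = K ⊔ I ^ (n + 2) := by rw [sup_mul_left_self]
  obtain ⟨n, hn⟩ := hI
  simpa [Submodule.pow_succ, hn] using hpow n

theorem Ideal.exists_le_span_singleton_sup_ker {S : Type*} [Ring S] {f : R →+* S}
    (hf : Function.Surjective f) {I : Ideal R} (hI : (I.map f).IsPrincipal) :
    ∃ a ∈ I, I ≤ span {a} ⊔ RingHom.ker f := by
  obtain ⟨s, hs⟩ := hI.principal
  have hsI : s ∈ I.map f := hs ▸ Submodule.mem_span_singleton_self s
  obtain ⟨a, haI, rfl⟩ := (mem_map_iff_of_surjective f hf).1 hsI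
  refine ⟨a, haI, fun x hx => ?_⟩
  obtain ⟨t, ht⟩ := mem_span_singleton'.1 (hs ▸ mem_map_of_mem f hx : f x ∈ S ∙ f a)
  obtain ⟨r, rfl⟩ := hf t
  rw [← add_sub_cancel (r * a) x]
  refine Submodule.add_mem_sup (mem_span_singleton'.2 ⟨r, rfl⟩) ?_
  rw [RingHom.mem_ker, map_sub, map_mul, ht, sub_self]

end

section

variable {R : Type*} [Ring R] {a : R}

theorem mem_span_pow_or_eq_unit_mul_pow (h : ∀ x : R, ¬IsUnit x → x ∈ span {a}) (k : ℕ)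
    (x : R) : x ∈ span {a ^ k} ∨ ∃ j < k, ∃ u : Rˣ, x = u * a ^ j := by
  induction k with
  | zero => simp
  | succ k ih =>
    rcases ih with hx | ⟨j, hj, u, rfl⟩
    · obtain ⟨r, rfl⟩ := mem_span_singleton'.1 hx
      by_cases hr : IsUnit r
      · exact Or.inr ⟨k, k.lt_succ_self, hr.unit, rfl⟩
      · obtain ⟨s, rfl⟩ := mem_span_singleton'.1 (h r hr)
        exact Or.inl (mem_span_singleton'.2 ⟨s, by rw [mul_assoc, ← pow_succ']⟩)
    · exact Or.inr ⟨j, Nat.lt_succ_of_lt hj, u, rfl⟩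

theorem exists_eq_span_pow_of_forall_not_isUnit_mem (ha : IsNilpotent a)
    (h : ∀ x : R, ¬IsUnit x → x ∈ span {a}) (I : Ideal R) : ∃ k, I = span {a ^ k} := by
  classical
  have hex : ∃ k, a ^ k ∈ I := let ⟨n, hn⟩ := ha; ⟨n, hn ▸ I.zero_mem⟩
  refine ⟨Nat.find hex, le_antisymm (fun x hx => ?_)
    ((span_singleton_le_iff_mem I).2 (Nat.find_spec hex))⟩
  refine (mem_span_pow_or_eq_unit_mul_pow h _ x).resolve_right ?_
  rintro ⟨j, hj, u, rfl⟩
  exact Nat.find_min hex hj (by simpa [← mul_assoc] using I.mul_mem_left (↑u⁻¹ : R) hx)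

theorem isPrincipalIdealRing_of_jacobsonRad_eq_span_singleton [IsLocalRing R] [IsArtinianRing R]
    (hJ : jacobsonRad R = span {a}) : IsPrincipalIdealRing R := by
  have ha : IsNilpotent a := by
    obtain ⟨n, hn⟩ := IsArtinianRing.isNilpotent_jacobson_bot (R := R)
    have := pow_mem_pow (hJ ▸ mem_span_singleton_self a : a ∈ jacobsonRad R) n
    rw [jacobsonRad, hn, zero_eq_bot, mem_bot] at this
    exact ⟨n, this⟩
  have h (x : R) (hx : ¬IsUnit x) : x ∈ span {a} := hJ ▸ mem_jacobsonRad_iff.2 hx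
  refine ⟨fun I => ?_⟩
  obtain ⟨k, hk⟩ := exists_eq_span_pow_of_forall_not_isUnit_mem ha h I
  exact ⟨a ^ k, hk⟩

end

theorem exists_jacobsonRad_eq_span_singleton {R S : Type*} [Ring R] [Ring S] [IsArtinianRing R]
    {f : R →+* S} (hf : Function.Surjective f) (hker : RingHom.ker f ≤ jacobsonRadSq R)
    (hJ : ((jacobsonRad R).map f).IsPrincipal) : ∃ a, jacobsonRad R = span {a} := by
  obtain ⟨a, haJ, hle⟩ := exists_le_span_singleton_sup_ker hf hJ
  refine ⟨a, le_antisymm ?_ ((span_singleton_le_iff_mem _).2 haJ)⟩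
  refine le_of_le_sup_mul_self_of_isNilpotent IsArtinianRing.isNilpotent_jacobson_bot ?_
  rw [← jacobsonRadSq_eq_mul]
  exact hle.trans (sup_le_sup_left hker _)

theorem IsPrincipalIdealRing.of_surjective_of_ker_le_jacobsonRadSq {R S : Type*} [Ring R] [Ring S]
    [IsLocalRing R] [IsArtinianRing R] [IsPrincipalIdealRing S] (f : R →+* S)
    (hf : Function.Surjective f) (hker : RingHom.ker f ≤ jacobsonRadSq R) :
    IsPrincipalIdealRing R :=
  have ⟨_, hJ⟩ := exists_jacobsonRad_eq_span_singleton hf hker (principal _)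
  isPrincipalIdealRing_of_jacobsonRad_eq_span_singleton hJ

theorem isPrincipalIdealRingNC_iff (R : Type*) [Ring R] :
    IsPrincipalIdealRingNC R ↔ IsPrincipalIdealRing R ∧ IsPrincipalIdealRing Rᵐᵒᵖ := by
  rw [isPrincipalIdealRing_iff, isPrincipalIdealRing_iff]
  rfl

/-- A local artinian ring `R` is a principal ideal ring iff `R/J²` is a
principal ideal ring.  The quotient is realized by any surjective ring
homomorphism with kernel `J(R)²`. -/
theorem local_PIR_iff_quotient_radSq_PIR (R : Type u) [Ring R]
    (hloc : IsLocalRing R) (hart : IsArtinianRing R) (hartop : IsArtinianRing Rᵐᵒᵖ)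
    (S : Type u) [Ring S] (f : R →+* S) (hf : Function.Surjective f)
    (hker : RingHom.ker f = jacobsonRadSq R) :
    IsPrincipalIdealRingNC R ↔ IsPrincipalIdealRingNC S := by
  have hfop := RingHom.op_surjective hf
  rw [isPrincipalIdealRingNC_iff, isPrincipalIdealRingNC_iff]
  constructor
  · rintro ⟨_, _⟩
    exact ⟨.of_surjective f hf, .of_surjective f.op hfop⟩
  · rintro ⟨_, _⟩
    exact ⟨.of_surjective_of_ker_le_jacobsonRadSq f hf hker.le,
      .of_surjective_of_ker_le_jacobsonRadSq f.op hfop (ker_op_le_jacobsonRadSq hker.le)⟩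
end

section
/- Let R be an artinian ring with Jacobson radical J(R), and let G be a finite group such that |G|·1 is a unit of R. Then the Jacobson radical of the group ring RG equals J(R)G, i.e., it equals the kernel of the natural surjective ring homomorphism RG → (R/J(R))G induced by the quotient map R → R/J(R) (the set of elements of RG all of whose coefficients lie in J(R)). -/
open Function

universe u v

/-!
If every coefficient of `v` lies in `J(R)`, the left `RG`-module `RG ⧸ RG(1 + v)` is finitely
generated over `R` and equals `J(R)` times itself, so it vanishes by Nakayama's lemma and `1 + v`
has a left inverse; hence `J(R)G ⊆ J(RG)`. Conversely, for a maximal left ideal `m` of `R` the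
`RG`-module `RG ⧸ mG` is `(R ⧸ m)^G` over `R`, hence semisimple over `R`, hence semisimple over
`RG` by Maschke's averaging argument, which is where `|G|` must be invertible. So `J(RG)`
annihilates it, i.e. `J(RG) ⊆ mG`, and intersecting over all `m` gives `J(RG) ⊆ J(R)G`.
-/

theorem LinearMap.isCompl_ker_of_injOn_of_surjOn {S M : Type*} [Ring S] [AddCommGroup M]
    [Module S M] {P : Submodule S M} (f : M →ₗ[S] M) (hf : ∀ v, f v ∈ P)
    (hinj : Set.InjOn f P) (hsurj : Set.SurjOn f P P) : IsCompl P (ker f) := by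
  constructor
  · rw [Submodule.disjoint_def]
    intro p hp hker
    exact hinj hp P.zero_mem (by rw [mem_ker.mp hker, map_zero])
  · rw [codisjoint_iff, eq_top_iff]
    rintro v -
    obtain ⟨p, hp, hfp⟩ := hsurj (hf v)
    exact Submodule.mem_sup.mpr ⟨p, hp, v - p, by simp [hfp], add_sub_cancel p v⟩

namespace MonoidAlgebra

variable {R : Type*} [Ring R] {G : Type*}

section Monoid
variable [Monoid G]

variable (G) in
def coeffIdeal (I : Ideal R) : Ideal R[G] where
  carrier := {x | ∀ g, x.coeff g ∈ I}
  add_mem' hx hy g := by simpa using add_mem (hx g) (hy g)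
  zero_mem' g := by simp
  smul_mem' y x hx g := by
    classical
    rw [smul_eq_mul, coeff_mul]
    exact Ideal.sum_mem _ fun a _ ↦ Ideal.sum_mem _ fun b _ ↦ by
      dsimp only
      split_ifs
      exacts [I.mul_mem_left _ (hx b), I.zero_mem]

@[simp]
lemma mem_coeffIdeal {I : Ideal R} {x : R[G]} : x ∈ coeffIdeal G I ↔ ∀ g, x.coeff g ∈ I :=
  Iff.rfl

lemma restrictScalars_coeffIdeal_le_smul_top (I : Ideal R) :
    (coeffIdeal G I).restrictScalars R ≤ I • (⊤ : Submodule R R[G]) := by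
  intro x hx
  rw [← sum_coeff_single x]
  refine Submodule.sum_mem _ fun g _ ↦ ?_
  rw [← mul_one (x.coeff g), ← smul_eq_mul, ← smul_single]
  exact Submodule.smul_mem_smul (hx g) Submodule.mem_top

instance [Finite G] : Module.Finite R R[G] :=
  Module.Finite.equiv (coeffLinearEquiv R).symm

lemma exists_mul_one_add_eq_one_of_mem_coeffIdeal [Finite G] {v : R[G]}
    (hv : v ∈ coeffIdeal G (Ring.jacobson R)) : ∃ z, z * (1 + v) = 1 := by
  let L := Ideal.span {1 + v}
  let mkL := L.mkQ.restrictScalars R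
  have : Module.Finite R (R[G] ⧸ L) := .of_surjective mkL (Submodule.mkQ_surjective L)
  have hle : (⊤ : Submodule R (R[G] ⧸ L)) ≤ Ring.jacobson R • ⊤ := by
    rintro q -
    obtain ⟨y, rfl⟩ := Submodule.mkQ_surjective L q
    have hy : mkL y = - mkL (y * v) := by
      rw [eq_neg_iff_add_eq_zero, ← map_add, ← mul_one_add]
      exact (Submodule.Quotient.mk_eq_zero L).mpr
        (L.mul_mem_left y (Ideal.mem_span_singleton_self _))
    have hyv : y * v ∈ Ring.jacobson R • (⊤ : Submodule R R[G]) :=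
      restrictScalars_coeffIdeal_le_smul_top _ ((coeffIdeal G _).mul_mem_left y hv)
    change mkL y ∈ _
    rw [hy]
    refine neg_mem ?_
    have := Submodule.mem_map_of_mem (f := mkL) hyv
    rw [Submodule.map_smul''] at this
    exact Submodule.smul_mono le_rfl le_top this
  have h1 : (1 : R[G]) ∈ L := by
    rw [← Submodule.Quotient.mk_eq_zero, ← Submodule.mem_bot R,
      ← Submodule.FG.eq_bot_of_le_jacobson_smul Module.Finite.fg_top hle]
    exact Submodule.mem_top
  exact Ideal.mem_span_singleton'.mp h1

lemma coeffIdeal_jacobson_le_jacobson [Finite G] :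
    coeffIdeal G (Ring.jacobson R) ≤ Ring.jacobson R[G] := by
  intro x hx
  rw [← Ideal.jacobson_bot, Ideal.mem_jacobson_iff]
  intro y
  obtain ⟨z, hz⟩ :=
    exists_mul_one_add_eq_one_of_mem_coeffIdeal ((coeffIdeal G _).mul_mem_left y hx)
  exact ⟨z, by rw [Ideal.mem_bot, mul_assoc, ← hz, mul_one_add]; abel⟩

lemma isSemisimpleModule_quotient_coeffIdeal (m : Ideal R) [m.IsMaximal] :
    IsSemisimpleModule R (R[G] ⧸ coeffIdeal G m) := by
  let φ : R[G] →ₗ[R] G →₀ R ⧸ m :=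
    Finsupp.mapRange.linearMap m.mkQ ∘ₗ (coeffLinearEquiv R).toLinearMap
  have hφ : Function.Surjective φ :=
    (Finsupp.mapRange_surjective _ (map_zero _) m.mkQ_surjective).comp
      (coeffLinearEquiv R).surjective
  have hker : (coeffIdeal G m).restrictScalars R = LinearMap.ker φ := by
    ext x
    simp [φ, Finsupp.ext_iff, Submodule.Quotient.mk_eq_zero]
  have : IsSimpleModule R (R ⧸ m) :=
    isSimpleModule_iff_isCoatom.mpr (Ideal.isMaximal_def.mp ‹_›)
  exact .congr ((Submodule.Quotient.restrictScalarsEquiv R (coeffIdeal G m)).symm ≪≫ₗ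
    Submodule.quotEquivOfEq _ _ hker ≪≫ₗ φ.quotKerEquivOfSurjective hφ)

variable {V W : Type*} [AddCommGroup V] [Module R V] [Module R[G] V] [IsScalarTower R R[G] V]
  [AddCommGroup W] [Module R W] [Module R[G] W] [IsScalarTower R R[G] W]

lemma single_one_smul_smul_comm (g : G) (r : R) (v : V) :
    single g (1 : R) • r • v = r • single g (1 : R) • v := by
  rw [← smul_one_smul R[G] r v, ← smul_one_smul R[G] r (single g 1 • v), smul_smul, smul_smul]
  simp [one_def]

variable (R V) in
noncomputable def groupSMulLinearMap (g : G) : V →ₗ[R] V where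
  toFun v := single g (1 : R) • v
  map_add' := smul_add _
  map_smul' := single_one_smul_smul_comm g

lemma map_smul_of_map_single_one_smul (f : V →ₗ[R] W)
    (h : ∀ (g : G) v, f (single g (1 : R) • v) = single g (1 : R) • f v) (x : R[G]) (v : V) :
    f (x • v) = x • f v := by
  induction x using MonoidAlgebra.induction_linear with
  | zero => simp
  | add x y hx hy => rw [add_smul, map_add, hx, hy, add_smul]
  | single g r =>
    rw [← mul_one r, ← smul_eq_mul, ← smul_single, smul_assoc, map_smul, h, smul_assoc]

end Monoid

section Group
variable [Group G] {V : Type*} [AddCommGroup V] [Module R V] [Module R[G] V]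
  [IsScalarTower R R[G] V]

section Fintype
variable [Fintype G]

variable (G) in
noncomputable def sumOfConjugates (π : V →ₗ[R] V) : V →ₗ[R] V :=
  ∑ g : G, groupSMulLinearMap R V g⁻¹ ∘ₗ π ∘ₗ groupSMulLinearMap R V g

lemma sumOfConjugates_apply (π : V →ₗ[R] V) (v : V) :
    sumOfConjugates G π v = ∑ g : G, single g⁻¹ (1 : R) • π (single g (1 : R) • v) := by
  simp [sumOfConjugates, groupSMulLinearMap]

lemma sumOfConjugates_single_one_smul (π : V →ₗ[R] V) (h : G) (v : V) :
    sumOfConjugates G π (single h (1 : R) • v) =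
      single h (1 : R) • sumOfConjugates G π v := by
  simp only [sumOfConjugates_apply, Finset.smul_sum, smul_smul, single_mul_single, one_mul]
  refine Fintype.sum_bijective (· * h) (Group.mulRight_bijective h) _ _ fun g ↦ ?_
  simp only [mul_inv_rev, mul_inv_cancel_left]

end Fintype

theorem isSemisimpleModule_of_isUnit_natCard [Finite G] (hG : IsUnit (Nat.card G : R))
    [IsSemisimpleModule R V] : IsSemisimpleModule R[G] V := by
  have := Fintype.ofFinite G
  obtain ⟨c, hc⟩ : ∃ c : R, c * Nat.card G = 1 := ⟨_, hG.unit.inv_mul⟩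
  refine { exists_isCompl := fun P ↦ ?_ }
  obtain ⟨Q, hPQ⟩ := exists_isCompl (P.restrictScalars R)
  let A := sumOfConjugates G ((P.restrictScalars R).projection Q hPQ)
  have hA_mem : ∀ v, A v ∈ P := fun v ↦ by
    rw [sumOfConjugates_apply]
    exact P.sum_mem fun g _ ↦ P.smul_mem _ (Submodule.projection_apply_mem hPQ _)
  have hA_id : ∀ p ∈ P, A p = (Nat.card G : R) • p := by
    intro p hp
    rw [sumOfConjugates_apply, Finset.sum_congr rfl fun g _ ↦ by
      rw [Submodule.projection_apply_of_mem_left hPQ (P.smul_mem _ hp), smul_smul,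
        single_mul_single, inv_mul_cancel, mul_one, ← one_def, one_smul]]
    rw [Finset.sum_const, Finset.card_univ, ← Nat.card_eq_fintype_card, Nat.cast_smul_eq_nsmul]
  let A' : V →ₗ[R[G]] V :=
    { A with map_smul' := map_smul_of_map_single_one_smul A (sumOfConjugates_single_one_smul _) }
  refine ⟨LinearMap.ker A', A'.isCompl_ker_of_injOn_of_surjOn hA_mem ?_ ?_⟩
  · intro p hp q hq h
    change A p = A q at h
    rw [hA_id p hp, hA_id q hq] at h
    simpa only [smul_smul, hc, one_smul] using congrArg (c • ·) h
  · intro p hp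
    refine ⟨c • p, P.smul_of_tower_mem c hp, ?_⟩
    change A (c • p) = p
    rw [hA_id _ (P.smul_of_tower_mem c hp), smul_smul, (Nat.cast_commute _ c).eq, hc, one_smul]

lemma jacobson_le_coeffIdeal [Finite G] (hG : IsUnit (Nat.card G : R)) (m : Ideal R)
    [m.IsMaximal] : Ring.jacobson R[G] ≤ coeffIdeal G m := by
  have := isSemisimpleModule_quotient_coeffIdeal (G := G) m
  have := isSemisimpleModule_of_isUnit_natCard (V := R[G] ⧸ coeffIdeal G m) hG
  intro x hx
  have hx_ann := Module.mem_annihilator.mp (IsSemisimpleModule.jacobson_le_annihilator R[G] _ hx)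
    (Submodule.Quotient.mk (1 : R[G]) : R[G] ⧸ coeffIdeal G m)
  rwa [← Submodule.Quotient.mk_smul, smul_eq_mul, mul_one,
    Submodule.Quotient.mk_eq_zero] at hx_ann

theorem jacobson_eq_coeffIdeal_jacobson [Finite G] (hG : IsUnit (Nat.card G : R)) :
    Ring.jacobson R[G] = coeffIdeal G (Ring.jacobson R) := by
  refine le_antisymm (fun x hx g ↦ ?_) coeffIdeal_jacobson_le_jacobson
  rw [Ring.jacobson_eq_sInf_isMaximal, Submodule.mem_sInf]
  intro m (hm : Ideal.IsMaximal m)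
  exact jacobson_le_coeffIdeal hG m hx g

end Group

end MonoidAlgebra

theorem jacobson_groupRing_eq_radical_coeffs_general (R : Type*) [Ring R]
    (G : Type*) [Group G] [Finite G] (hG : IsUnit ((Nat.card G : R))) :
    ∀ x : MonoidAlgebra R G,
      x ∈ jacobsonRad (MonoidAlgebra R G) ↔ ∀ g : G, x.coeff g ∈ jacobsonRad R := by
  intro x
  rw [jacobsonRad, jacobsonRad, Ideal.jacobson_bot, Ideal.jacobson_bot,
    MonoidAlgebra.jacobson_eq_coeffIdeal_jacobson hG, MonoidAlgebra.mem_coeffIdeal]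

/-- For `R` an artinian ring and `G` a finite group with `|G|·1` a unit of `R`,
the Jacobson radical of the group ring `RG` consists exactly of those elements
all of whose coefficients lie in `J(R)` (i.e. it equals `J(R)G`, the kernel of
the coefficientwise surjection `RG → (R/J(R))G`). -/
theorem jacobson_groupRing_eq_radical_coeffs (R : Type*) [Ring R]
    (hart : IsArtinianRing R) (hartop : IsArtinianRing Rᵐᵒᵖ)
    (G : Type*) [Group G] [Finite G] (hG : IsUnit ((Nat.card G : R))) :
    ∀ x : MonoidAlgebra R G,
      x ∈ jacobsonRad (MonoidAlgebra R G) ↔ ∀ g : G, x.coeff g ∈ jacobsonRad R :=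
  jacobson_groupRing_eq_radical_coeffs_general R G hG
end

section
/- Let D be a division ring, let n ≥ 1, and let φ be a ring automorphism of the matrix ring M_n(D). Then there exist an invertible matrix U ∈ M_n(D) and a ring automorphism σ of D such that φ(A) = U · σ(A) · U⁻¹ for every A ∈ M_n(D), where σ(A) denotes the matrix obtained by applying σ to each entry of A. -/
open Function

universe u v

/-!
The images `f i j = φ (single i j 1)` form a system of matrix units. For any `X`, the matrix
`U = ∑ₖ f k z * X * single z k 1` satisfies `f i j * U = U * single i j 1`, and its mirror
`V = ∑ₖ single k z 1 * Y * f z k` gives `V * U = (Y * f z z * X) z z • 1`. Since `f z z ≠ 0` and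
`D` is a division ring, `X` and `Y` can be chosen to make this scalar `1`, and matrix rings over a
division ring are Dedekind-finite, so `U` is invertible. Conjugating `φ` by `U` gives a ring
endomorphism `ψ` fixing every `single i j 1`, and such a `ψ` sends `single i j d` to
`single i j (σ d)` for the ring endomorphism `σ d = ψ (single z z d) z z` of `D`, which is
bijective when `φ` is.
-/

namespace Matrix

variable {ι R S : Type*} [Fintype ι] [DecidableEq ι] [Semiring R] [Semiring S]

def intertwiner (φ ψ : Matrix ι ι R →+* S) (z : ι) (X : S) : S :=
  ∑ k, φ (single k z 1) * X * ψ (single z k 1)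

theorem map_single_mul_map_single (φ : Matrix ι ι R →+* S) (i j k l : ι) :
    φ (single i j 1) * φ (single k l 1) = if j = k then φ (single i l 1) else 0 := by
  split_ifs with h
  · rw [← map_mul, h, single_mul_single_same, one_mul]
  · rw [← map_mul, single_mul_single_of_ne (h := h), map_zero]

theorem map_single_mul_intertwiner (φ ψ : Matrix ι ι R →+* S) (z : ι) (X : S) (i j : ι) :
    φ (single i j 1) * intertwiner φ ψ z X = intertwiner φ ψ z X * ψ (single i j 1) := by
  simp only [intertwiner, Finset.mul_sum, Finset.sum_mul, ← mul_assoc,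
    map_single_mul_map_single, ite_mul, zero_mul, Finset.sum_ite_eq, Finset.mem_univ, if_true]
  simp only [mul_assoc, map_single_mul_map_single, mul_ite, mul_zero, Finset.sum_ite_eq',
    Finset.mem_univ, if_true]

theorem intertwiner_mul_intertwiner (φ ψ χ : Matrix ι ι R →+* S) (z : ι) (X Y : S) :
    intertwiner φ ψ z X * intertwiner ψ χ z Y = intertwiner φ χ z (X * ψ (single z z 1) * Y) := by
  simp only [intertwiner, Finset.sum_mul, Finset.mul_sum]
  refine Finset.sum_congr rfl fun k _ => ?_
  simp only [mul_assoc, ← mul_assoc (ψ _) (ψ _), map_single_mul_map_single, ite_mul, zero_mul,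
    mul_ite, mul_zero, Finset.sum_ite_eq', Finset.mem_univ, if_true]

theorem intertwiner_id (z : ι) (N : Matrix ι ι R) :
    intertwiner (RingHom.id _) (RingHom.id _) z N = scalar ι (N z z) := by
  simp [intertwiner, scalar_apply, ← sum_single_eq_diagonal]

section FixingMatrixUnits

variable {ψ : Matrix ι ι R →+* Matrix ι ι S}

theorem map_single_eq_single_of_map_single_one (hψ : ∀ i j, ψ (single i j 1) = single i j 1)
    (z i j : ι) (r : R) : ψ (single i j r) = single i j (ψ (single z z r) z z) := by
  have : single i j r = single i z 1 * single z z r * single z j 1 := by simp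
  rw [this, map_mul, map_mul, hψ, hψ, single_mul_mul_single, one_mul, mul_one]

theorem exists_eq_mapMatrix_of_map_single_one [Nonempty ι]
    (hψ : ∀ i j, ψ (single i j 1) = single i j 1) : ∃ σ : R →+* S, ψ = σ.mapMatrix := by
  obtain ⟨z⟩ := ‹Nonempty ι›
  have hsingle := map_single_eq_single_of_map_single_one hψ z
  let σ : R →+* S :=
    { toFun r := ψ (single z z r) z z
      map_one' := by simp [hψ]
      map_mul' r s := by
        change ψ (single z z (r * s)) z z = ψ (single z z r) z z * ψ (single z z s) z z
        rw [← single_mul_single_same r z z z s, map_mul, hsingle z z r, hsingle z z s]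
        simp
      map_zero' := by simp
      map_add' r s := by simp [single_add] }
  refine ⟨σ, RingHom.ext fun A => ?_⟩
  conv_lhs => rw [matrix_eq_sum_single A]
  rw [RingHom.mapMatrix_apply, matrix_eq_sum_single (A.map σ), map_sum]
  exact Finset.sum_congr rfl fun i _ => by
    rw [map_sum]
    exact Finset.sum_congr rfl fun j _ => hsingle i j _

end FixingMatrixUnits

theorem map_single_self_ne_zero [Nontrivial S] (φ : Matrix ι ι R →+* S) (z : ι) :
    φ (single z z 1) ≠ 0 := by
  intro h
  have h1 := congrArg φ (intertwiner_id z (single z z (1 : R)))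
  simp only [intertwiner, RingHom.id_apply, map_sum, map_mul, h, mul_zero, zero_mul,
    Finset.sum_const_zero] at h1
  simp at h1

theorem bijective_of_bijective_map {m n α β : Type*} [Nonempty m] [Nonempty n] {f : α → β}
    (hf : Bijective fun A : Matrix m n α => A.map f) : Bijective f := by
  obtain ⟨i⟩ := ‹Nonempty m›
  obtain ⟨j⟩ := ‹Nonempty n›
  refine ⟨fun a b hab => ?_, fun b => ?_⟩
  · have := @hf.1 (of fun _ _ => a) (of fun _ _ => b) (by ext; simp [hab])
    exact congrFun (congrFun this i) j
  · obtain ⟨A, hA⟩ := hf.2 (of fun _ _ => b)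
    exact ⟨A i j, congrFun (congrFun hA i) j⟩

section DivisionRing

variable {D : Type*} [DivisionRing D]

theorem exists_mul_mul_apply_eq_one {M : Matrix ι ι D} (hM : M ≠ 0) (z : ι) :
    ∃ Y X : Matrix ι ι D, (Y * M * X) z z = 1 := by
  obtain ⟨a, b, hab⟩ : ∃ a b, M a b ≠ 0 := by
    by_contra! h
    exact hM (ext h)
  exact ⟨single z a (M a b)⁻¹, single b z 1, by simp [hab]⟩

theorem exists_eq_conj_map_of_ringHom [Nonempty ι] (φ : Matrix ι ι D →+* Matrix ι ι D) :
    ∃ (U : (Matrix ι ι D)ˣ) (σ : D →+* D), ∀ A, φ A = U * A.map σ * (↑U⁻¹ : Matrix ι ι D) := by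
  obtain ⟨z⟩ := ‹Nonempty ι›
  obtain ⟨Y, X, hYX⟩ := exists_mul_mul_apply_eq_one (map_single_self_ne_zero φ z) z
  set U := intertwiner φ (RingHom.id _) z X
  set V := intertwiner (RingHom.id _) φ z Y
  have hU : ∀ i j, φ (single i j 1) * U = U * single i j 1 :=
    map_single_mul_intertwiner φ (RingHom.id _) z X
  have hVU : V * U = 1 := by
    rw [intertwiner_mul_intertwiner, intertwiner_id, hYX, map_one]
  have hUV : U * V = 1 := mul_eq_one_comm.mp hVU
  let W : (Matrix ι ι D)ˣ := ⟨U, V, hUV, hVU⟩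
  let conj := MulSemiringAction.toRingEquiv _ (Matrix ι ι D) (ConjAct.toConjAct W⁻¹)
  obtain ⟨σ, hσ⟩ := exists_eq_mapMatrix_of_map_single_one (ψ := conj.toRingHom.comp φ)
    fun i j => by
      change V * φ (single i j 1) * U = single i j 1
      rw [mul_assoc, hU, ← mul_assoc, hVU, one_mul]
  refine ⟨W, σ, fun A => ?_⟩
  rw [← RingHom.mapMatrix_apply, ← hσ]
  change φ A = U * (V * φ A * U) * V
  rw [← mul_assoc, ← mul_assoc, hUV, one_mul, mul_assoc, hUV, mul_one]

theorem exists_eq_conj_map_of_ringEquiv [Nonempty ι] (φ : Matrix ι ι D ≃+* Matrix ι ι D) :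
    ∃ (U : (Matrix ι ι D)ˣ) (σ : D ≃+* D), ∀ A, φ A = U * A.map σ * (↑U⁻¹ : Matrix ι ι D) := by
  obtain ⟨U, σ, h⟩ := exists_eq_conj_map_of_ringHom (φ : Matrix ι ι D →+* Matrix ι ι D)
  simp only [RingHom.coe_coe] at h
  let conj := MulSemiringAction.toRingEquiv _ (Matrix ι ι D) (ConjAct.toConjAct U⁻¹)
  have hmap : (fun A : Matrix ι ι D => A.map σ) = conj ∘ φ := by
    ext1 A
    simp [conj, ConjAct.units_smul_def, h, mul_assoc]
  have hσ : Bijective σ :=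
    bijective_of_bijective_map (hmap ▸ conj.bijective.comp φ.bijective)
  exact ⟨U, RingEquiv.ofBijective σ hσ, h⟩

end DivisionRing

end Matrix

theorem matrix_ring_automorphism_inner_comp_entrywise_general (D : Type*) [DivisionRing D]
    (n : ℕ)
    (φ : Matrix (Fin n) (Fin n) D ≃+* Matrix (Fin n) (Fin n) D) :
    ∃ (U V : Matrix (Fin n) (Fin n) D) (σ : D ≃+* D),
      U * V = 1 ∧ V * U = 1 ∧
      ∀ A : Matrix (Fin n) (Fin n) D, φ A = U * A.map σ * V := by
  cases isEmpty_or_nonempty (Fin n)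
  · exact ⟨1, 1, RingEquiv.refl D, mul_one 1, mul_one 1, fun _ => Subsingleton.elim _ _⟩
  · obtain ⟨U, σ, h⟩ := Matrix.exists_eq_conj_map_of_ringEquiv φ
    exact ⟨U, ↑U⁻¹, σ, U.mul_inv, U.inv_mul, h⟩

/-- Every ring automorphism of `M_n(D)`, `D` a division ring, is the composite
of an inner automorphism (by an invertible matrix `U`, with inverse `V`) and a
ring automorphism of `D` applied entrywise. -/
theorem matrix_ring_automorphism_inner_comp_entrywise (D : Type*) [DivisionRing D]
    (n : ℕ) (hn : 1 ≤ n)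
    (φ : Matrix (Fin n) (Fin n) D ≃+* Matrix (Fin n) (Fin n) D) :
    ∃ (U V : Matrix (Fin n) (Fin n) D) (σ : D ≃+* D),
      U * V = 1 ∧ V * U = 1 ∧
      ∀ A : Matrix (Fin n) (Fin n) D, φ A = U * A.map σ * V :=
  matrix_ring_automorphism_inner_comp_entrywise_general D n φ
end

section
/- Let π be a nonempty finite set of primes and let G be a group. Then G is finite π'-by-cyclic π if and only if for every p ∈ π, G is finite p'-by-cyclic p. -/
open Function

universe u v

/-!
Only the prime-power parts of a cyclic quotient matter. Going down, compose `G → ℤ/n` with the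
reduction `ℤ/n → ℤ/p^r` onto the `p`-part of `n`; its kernel grows by the factor `n / p^r`,
which is prime to `p`. Going up, the maps `G → ℤ/p^{r_p}` (`p ∈ π`) have pairwise coprime
targets, so together they map `G` onto `∏ ℤ/p^{r_p} ≅ ℤ/∏ p^{r_p}`, with a kernel contained in
every one of their kernels.
-/

open scoped Function

theorem Nat.card_multiplicative_zmod (n : ℕ) : Nat.card (Multiplicative (ZMod n)) = n :=
  Nat.card_zmod n

theorem MonoidHom.card_eq_card_mul_card_ker_of_surjective {G H : Type*} [Group G] [Group H]
    (φ : G →* H) (hφ : Surjective φ) : Nat.card G = Nat.card H * Nat.card φ.ker := by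
  rw [← φ.ker.card_mul_index, Subgroup.index_ker, MonoidHom.range_eq_top.mpr hφ,
    Subgroup.card_top, mul_comm]

theorem MonoidHom.pi_surjective_of_coprime_card {ι G : Type*} [Fintype ι] [Group G]
    {M : ι → Type*} [∀ i, Group (M i)] [∀ i, Finite (M i)] (φ : ∀ i, G →* M i)
    (hφ : ∀ i, Surjective (φ i)) (hcop : Pairwise (Nat.Coprime on fun i => Nat.card (M i))) :
    Surjective (MonoidHom.pi φ) := by
  have hdvd : ∀ i, Nat.card (M i) ∣ Nat.card (MonoidHom.pi φ).range := fun i =>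
    Subgroup.card_dvd_of_surjective ((Pi.evalMonoidHom M i).comp (MonoidHom.pi φ).range.subtype)
      fun y => let ⟨g, hg⟩ := hφ i y; ⟨⟨_, g, rfl⟩, hg⟩
  have hprod : Nat.card (∀ i, M i) ∣ Nat.card (MonoidHom.pi φ).range := by
    rw [Nat.card_pi]
    exact Fintype.prod_dvd_of_isRelPrime (fun i j h => Nat.coprime_iff_isRelPrime.mp (hcop h)) hdvd
  rw [← MonoidHom.range_eq_top]
  exact Subgroup.eq_top_of_card_eq _ (Nat.dvd_antisymm (Subgroup.card_subgroup_dvd_card _) hprod)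

noncomputable def ZMod.multiplicativeProdEquivPi {ι : Type*} [Fintype ι] (a : ι → ℕ)
    (hcop : Pairwise (Nat.Coprime on a)) :
    Multiplicative (ZMod (∏ i, a i)) ≃* ∀ i, Multiplicative (ZMod (a i)) :=
  (AddEquiv.toMultiplicative (ZMod.prodEquivPi a hcop).toAddEquiv).trans
    (MulEquiv.piMultiplicative _)

theorem IsFinitePrimeToPByCyclicP.of_surjective_zmod {p n : ℕ} (hp : p.Prime) (hn : n ≠ 0)
    {G : Type*} [Group G] (φ : G →* Multiplicative (ZMod n)) (hφ : Surjective φ)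
    [Finite φ.ker] (hpφ : ¬ p ∣ Nat.card φ.ker) : IsFinitePrimeToPByCyclicP p G := by
  set r := n.factorization p
  let ψ : Multiplicative (ZMod n) →* Multiplicative (ZMod (p ^ r)) :=
    (ZMod.castHom (Nat.ordProj_dvd n p) _).toAddMonoidHom.toMultiplicative
  have hψ : Surjective ψ := ZMod.castHom_surjective (Nat.ordProj_dvd n p)
  have hψφ : Surjective (ψ.comp φ) := hψ.comp hφ
  have hcard : Nat.card (ψ.comp φ).ker = n / p ^ r * Nat.card φ.ker := by
    have hG := (ψ.comp φ).card_eq_card_mul_card_ker_of_surjective hψφ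
    rw [φ.card_eq_card_mul_card_ker_of_surjective hφ, Nat.card_multiplicative_zmod,
      Nat.card_multiplicative_zmod] at hG
    refine Nat.eq_of_mul_eq_mul_left (pow_pos hp.pos r) ?_
    rw [← hG, ← mul_assoc, Nat.ordProj_mul_ordCompl_eq_self]
  refine ⟨r, ψ.comp φ, hψφ, Nat.finite_of_card_ne_zero ?_, ?_⟩
  · rw [hcard]
    exact mul_ne_zero (Nat.div_pos (Nat.ordProj_le p hn) (pow_pos hp.pos r)).ne' Nat.card_pos.ne'
  · rw [hcard, hp.dvd_mul]
    exact not_or_intro (Nat.not_dvd_ordCompl hp hn) hpφ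

theorem IsFinitePrimeToPiByCyclicPi.of_forall {π : Set ℕ} (hfin : π.Finite) (hne : π.Nonempty)
    (hprime : ∀ p ∈ π, p.Prime) {G : Type*} [Group G]
    (h : ∀ p ∈ π, IsFinitePrimeToPByCyclicP p G) : IsFinitePrimeToPiByCyclicPi π G := by
  have := hfin.fintype
  choose r φ hφ hfinite hpφ using fun p : π => h p p.2
  set a : π → ℕ := fun p => (p : ℕ) ^ r p
  have ha : ∀ p, 0 < a p := fun p => pow_pos (hprime p p.2).pos _
  have : ∀ p, NeZero (a p) := fun p => ⟨(ha p).ne'⟩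
  have hcop : Pairwise (Nat.Coprime on a) := fun p q hpq =>
    Nat.Coprime.pow _ _ ((Nat.coprime_primes (hprime p p.2) (hprime q q.2)).mpr
      (Subtype.coe_injective.ne hpq))
  let Ψ := (ZMod.multiplicativeProdEquivPi a hcop).symm.toMonoidHom.comp (MonoidHom.pi φ)
  have hker : ∀ p, Ψ.ker ≤ (φ p).ker := fun p x hx =>
    congrFun ((ZMod.multiplicativeProdEquivPi a hcop).symm.map_eq_one_iff.mp hx) p
  obtain ⟨p₀, hp₀⟩ := hne
  refine ⟨∏ p, a p, Ψ, Finset.prod_pos fun p _ => ha p, ?_, ?_,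
    Finite.of_injective _ (Subgroup.inclusion_injective (hker ⟨p₀, hp₀⟩)), ?_⟩
  · intro q hq hqa
    obtain ⟨p, -, hqp⟩ := hq.prime.exists_mem_finset_dvd hqa
    rw [(Nat.prime_dvd_prime_iff_eq hq (hprime p p.2)).mp (hq.dvd_of_dvd_pow hqp)]
    exact p.2
  · refine (ZMod.multiplicativeProdEquivPi a hcop).symm.surjective.comp
      (MonoidHom.pi_surjective_of_coprime_card φ hφ ?_)
    simpa only [Nat.card_multiplicative_zmod] using hcop
  · exact fun q hq hqΨ => hpφ ⟨q, hq⟩ (hqΨ.trans (Subgroup.card_dvd_of_le (hker ⟨q, hq⟩)))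

/-- For a nonempty finite set of primes `π`, a group `G` is finite
`π'`-by-cyclic `π` iff it is finite `p'`-by-cyclic `p` for every `p ∈ π`. -/
theorem finitePrimeToPiByCyclicPi_iff (π : Set ℕ) (hfin : π.Finite)
    (hne : π.Nonempty) (hprime : ∀ p ∈ π, Nat.Prime p)
    (G : Type*) [Group G] :
    IsFinitePrimeToPiByCyclicPi π G ↔ ∀ p ∈ π, IsFinitePrimeToPByCyclicP p G := by
  constructor
  · rintro ⟨n, φ, hn, -, hφ, hfinite, hπ⟩ p hp
    exact .of_surjective_zmod (hprime p hp) hn.ne' φ hφ (hπ p hp)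
  · exact .of_forall hfin hne hprime
end

section
/- Let R be a ring and let G be a locally finite group (every finitely generated subgroup of G is finite). Then the group ring RG is left morphic if and only if for every x ∈ RG there exists a finite subgroup H of G such that x lies in the subring RH of RG (the image of the group ring of H under the inclusion-induced embedding RH → RG) and x is left morphic as an element of the ring RH. -/
open Function

universe u v

/-! Write `ι : RH → RG` for the inclusion and `π : RG → RH` for restriction of coefficients to
`H`. Then `π ∘ ι = id` and `π` is right `RH`-linear: `π (z * ι w) = π z * w`.

If `x` is left morphic in `RG` with partner `b`, let `H` be the subgroup generated by the supports
of `x` and `b`; it is finite by local finiteness, and applying `π` to the relations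
`RG x = ann_ℓ b`, `RG b = ann_ℓ x` gives the same relations for `π x, π b` in `RH`.

Conversely, `RG` is a free right `RH`-module on left coset representatives:
`z = ∑ g · ι (π (g⁻¹ z))`, the sum over representatives `g` of the cosets meeting the support
of `z`. If `z * ι b = 0` then `π (g⁻¹ z) * b = π (g⁻¹ z * ι b) = 0` for every `g`, so each
`π (g⁻¹ z)` lies in `RH a` once `RH a = ann_ℓ b`, and therefore `z ∈ RG · ι a`. -/

open MonoidAlgebra

namespace MonoidAlgebra

theorem comapDomain_mapDomain {R M N : Type*} [Semiring R] {f : M → N} (hf : Injective f)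
    (x : R[M]) : comapDomain f hf (mapDomain f x) = x := by
  ext : 1
  exact Finsupp.comapDomain_mapDomain _ hf _

variable {R G : Type*} [Semiring R] [Group G] (H : Subgroup G)

theorem mapDomain_comapDomain_subtype {z : R[G]} (hz : ↑z.coeff.support ⊆ (H : Set G)) :
    mapDomain H.subtype (comapDomain H.subtype H.subtype_injective z) = z :=
  mapDomain_comapDomain (by simpa using hz) _

open scoped Classical in
theorem coeff_mapDomain_comapDomain_subtype (z : R[G]) (g : G) :
    (mapDomain H.subtype (comapDomain H.subtype H.subtype_injective z)).coeff g =
      if g ∈ H then z.coeff g else 0 := by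
  split_ifs with hg
  · exact Finsupp.mapDomain_apply H.subtype_injective _ (⟨g, hg⟩ : H)
  · exact Finsupp.mapDomain_of_notMem_range _ _ (by simpa using hg)

theorem comapDomain_subtype_mul_mapDomain (z : R[G]) (w : R[H]) :
    comapDomain H.subtype H.subtype_injective (z * mapDomain H.subtype w) =
      comapDomain H.subtype H.subtype_injective z * w := by
  induction z using induction_linear with
  | zero => simp
  | add z₁ z₂ h₁ h₂ => rw [add_mul, comapDomain_add, h₁, h₂, comapDomain_add, add_mul]
  | single g a =>
    induction w using induction_linear with
    | zero => simp
    | add w₁ w₂ h₁ h₂ => rw [mapDomain_add, mul_add, comapDomain_add, h₁, h₂, mul_add]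
    | single k c =>
      rw [mapDomain_single, single_mul_single]
      by_cases hg : g ∈ H
      · lift g to H using hg
        have hg : (g : G) = H.subtype g := rfl
        rw [hg, ← map_mul, comapDomain_single_map, comapDomain_single_map, single_mul_single]
      · have hgk : g * H.subtype k ∉ Set.range H.subtype := by
          simpa using fun h => hg (by simpa using H.mul_mem h (H.inv_mem k.2))
        rw [comapDomain_single_of_not_mem_range hgk,
          comapDomain_single_of_not_mem_range (by simpa using hg), zero_mul]

open scoped Classical in
theorem sum_single_out_mul_mapDomain_comapDomain (z : R[G]) :
    ∑ q ∈ z.coeff.support.image (QuotientGroup.mk : G → G ⧸ H),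
      single q.out (1 : R) * mapDomain H.subtype
        (comapDomain H.subtype H.subtype_injective (single q.out⁻¹ 1 * z)) = z := by
  ext x
  have hcoset (q : G ⧸ H) : q.out⁻¹ * x ∈ H ↔ (x : G ⧸ H) = q := by
    rw [← QuotientGroup.eq, QuotientGroup.out_eq']
    exact eq_comm
  simp_rw [coeff_sum, Finsupp.finsetSum_apply, coeff_single_mul_apply, one_mul,
    coeff_mapDomain_comapDomain_subtype, coeff_single_mul_apply, inv_inv, mul_inv_cancel_left,
    one_mul, hcoset]
  rw [Finset.sum_ite_eq, ite_eq_left_iff]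
  intro hx
  exact (Finsupp.notMem_support_iff.mp fun hxz => hx (Finset.mem_image_of_mem _ hxz)).symm

end MonoidAlgebra

/-- `S a = ann_ℓ(b)`: thus `a` is left morphic iff `LeftSpanEqAnn a b ∧ LeftSpanEqAnn b a` for
some `b`. -/
def LeftSpanEqAnn {S : Type*} [Semiring S] (a b : S) : Prop :=
  ∀ x : S, x * b = 0 ↔ ∃ r, x = r * a

theorem LeftSpanEqAnn.of_map {S T : Type*} [Semiring S] [Semiring T] (f : S →+* T) (π : T → S)
    (hπf : LeftInverse π f) (hπ : ∀ t s, π (t * f s) = π t * s) {a b : S}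
    (h : LeftSpanEqAnn (f a) (f b)) : LeftSpanEqAnn a b := by
  intro x
  rw [← hπf.injective.eq_iff, map_mul, map_zero, h]
  constructor
  · rintro ⟨r, hr⟩
    exact ⟨π r, by rw [← hπ, ← hr, hπf]⟩
  · rintro ⟨r, rfl⟩
    exact ⟨f r, map_mul f r a⟩

section GroupRing

variable {R G : Type*} [Semiring R] [Group G] {H : Subgroup G}

theorem LeftSpanEqAnn.comapDomain_subtype {a b : R[G]} (h : LeftSpanEqAnn a b)
    (ha : ↑a.coeff.support ⊆ (H : Set G)) (hb : ↑b.coeff.support ⊆ (H : Set G)) :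
    LeftSpanEqAnn (comapDomain H.subtype H.subtype_injective a)
      (comapDomain H.subtype H.subtype_injective b) :=
  .of_map (mapDomainRingHom R H.subtype) (comapDomain H.subtype H.subtype_injective)
    (comapDomain_mapDomain _) (comapDomain_subtype_mul_mapDomain H)
    (by simpa only [mapDomainRingHom_apply, mapDomain_comapDomain_subtype H ha,
      mapDomain_comapDomain_subtype H hb] using h)

theorem LeftSpanEqAnn.mapDomain_subtype {a b : R[H]} (h : LeftSpanEqAnn a b) :
    LeftSpanEqAnn (mapDomainRingHom R H.subtype a) (mapDomainRingHom R H.subtype b) := by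
  classical
  intro z
  constructor
  · intro hz
    have hcomponent (g : G) :
        ∃ s, comapDomain H.subtype H.subtype_injective (single g 1 * z) = s * a := by
      refine (h _).mp ?_
      rw [← comapDomain_subtype_mul_mapDomain, mul_assoc, ← mapDomainRingHom_apply, hz, mul_zero,
        comapDomain_zero]
    choose s hs using hcomponent
    refine ⟨∑ q ∈ z.coeff.support.image (QuotientGroup.mk : G → G ⧸ H),
      single q.out 1 * mapDomainRingHom R H.subtype (s q.out⁻¹), ?_⟩
    conv_lhs => rw [← sum_single_out_mul_mapDomain_comapDomain H z]
    rw [Finset.sum_mul]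
    refine Finset.sum_congr rfl fun q _ => ?_
    rw [hs, mul_assoc, ← map_mul]
    rfl
  · rintro ⟨r, rfl⟩
    rw [mul_assoc, ← map_mul, (h a).mpr ⟨1, (one_mul a).symm⟩, map_zero, mul_zero]

end GroupRing

/-- For `G` locally finite, the group ring `RG` is left morphic iff every
element of `RG` lies in the image of `RH → RG` for some finite subgroup
`H ≤ G` and is left morphic as an element of `RH`. -/
theorem locallyFinite_groupRing_leftMorphic_iff (R : Type*) [Ring R]
    (G : Type*) [Group G] (hG : ∀ H : Subgroup G, H.FG → Finite H) :
    IsLeftMorphicRing (MonoidAlgebra R G) ↔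
      ∀ x : MonoidAlgebra R G, ∃ H : Subgroup G, Finite H ∧
        ∃ y : MonoidAlgebra R H,
          MonoidAlgebra.mapDomainRingHom R H.subtype y = x ∧ IsLeftMorphicElem y := by
  classical
  constructor
  · intro hmorphic x
    obtain ⟨b, hxb, hbx⟩ := hmorphic x
    set K := Subgroup.closure (↑(x.coeff.support ∪ b.coeff.support) : Set G)
    have hx : ↑x.coeff.support ⊆ (K : Set G) := fun g hg => Subgroup.subset_closure (by simp [hg])
    have hb : ↑b.coeff.support ⊆ (K : Set G) := fun g hg => Subgroup.subset_closure (by simp [hg])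
    exact ⟨K, hG K ⟨_, rfl⟩, _, mapDomain_comapDomain_subtype K hx, _,
      LeftSpanEqAnn.comapDomain_subtype hxb hx hb, LeftSpanEqAnn.comapDomain_subtype hbx hb hx⟩
  · intro h a
    obtain ⟨K, -, y, rfl, c, hyc, hcy⟩ := h a
    exact ⟨_, LeftSpanEqAnn.mapDomain_subtype hyc, LeftSpanEqAnn.mapDomain_subtype hcy⟩
end
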